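/- With G as above, the minimum strings satisfy the recurrence: for every node u, min_u = c · min_v where (v, u) is an edge labeled c chosen so that the pair (c, min_v) is lexicographically smallest among all incoming edges of u; in particular, min_u(0) equals the smallest label among incoming edges of u. -/

import Mathlib

open scoped Classical

/-- Length of the longest common prefix of two infinite strings, valued in `ℕ∞`. -/
noncomputable def lcp {A : Type*} (α β : ℕ → A) : ℕ∞ :=
  ⨆ k : {k : ℕ // ∀ i < k, α i = β i}, (k : ℕ∞)

/-- Strict lexicographic order on infinite strings. -/
def LexLt {A : Type*} [LinearOrder A] (α β : ℕ → A) : Prop :=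
  ∃ i, (∀ j < i, α j = β j) ∧ α i < β i

/-- Non-strict lexicographic order on infinite strings. -/
def LexLe {A : Type*} [LinearOrder A] (α β : ℕ → A) : Prop :=
  LexLt α β ∨ α = β

/-- Prepend a character to an infinite string. -/
def consStr {A : Type*} (c : A) (α : ℕ → A) : ℕ → A :=
  fun n => Nat.casesOn n c α

/-- `α` can be read from `u` following edges of the labeled graph `edge` backward. -/
def ReadableBackward {V A : Type*} (edge : V → V → A → Prop) (u : V) (α : ℕ → A) : Prop :=
  ∃ v : ℕ → V, v 0 = u ∧ ∀ k, edge (v (k + 1)) (v k) (α k)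

/-- `α` is the lexicographically smallest infinite string readable backward from `u`. -/
def IsMinStr {V A : Type*} [LinearOrder A] (edge : V → V → A → Prop) (u : V) (α : ℕ → A) : Prop :=
  ReadableBackward edge u α ∧ ∀ β, ReadableBackward edge u β → LexLe α β

/-- `α` is the lexicographically largest infinite string readable backward from `u`. -/
def IsMaxStr {V A : Type*} [LinearOrder A] (edge : V → V → A → Prop) (u : V) (α : ℕ → A) : Prop :=
  ReadableBackward edge u α ∧ ∀ β, ReadableBackward edge u β → LexLe β α

/-- A finite string occurs as the label of a (forward) walk in the graph. -/
def Occurs {V A : Type*} (edge : V → V → A → Prop) (s : List A) : Prop :=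
  ∃ v : ℕ → V, ∀ k, (h : k < s.length) → edge (v k) (v (k + 1)) (s.get ⟨k, h⟩)

/-! A string readable backward from `u` is a label `c` of an edge `v → u` followed by a string
readable from `v`. Take `v` to be the second node on a path reading `min_u`. Then `c · min_v` is
readable from `u`, so the tail of `min_u` is at most `min_v`; the tail is readable from `v`, so it
is at least `min_v`. Hence `min_u = c · min_v`, and minimality of `min_u` against every readable
`c' · min_v'` gives the rest. -/

section LexOrder

variable {A : Type*} [LinearOrder A]

lemma LexLe.antisymm {α β : ℕ → A} (hαβ : LexLe α β) (hβα : LexLe β α) : α = β := by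
  rcases hαβ with ⟨i, hpre, hlt⟩ | rfl
  · rcases hβα with ⟨i', hpre', hlt'⟩ | rfl
    · exfalso
      rcases lt_trichotomy i i' with h | rfl | h
      · exact (hpre' i h ▸ hlt).false
      · exact (hlt.trans hlt').false
      · exact (hpre i' h ▸ hlt').false
    · rfl
  · rfl

lemma LexLe.of_consStr {c : A} {α β : ℕ → A} (h : LexLe (consStr c α) (consStr c β)) :
    LexLe α β := by
  rcases h with ⟨_ | i, hpre, hlt⟩ | h
  · exact (lt_irrefl c hlt).elim
  · exact Or.inl ⟨i, fun j hj => hpre (j + 1) (by omega), hlt⟩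
  · exact Or.inr (funext fun n => congrFun h (n + 1))

lemma LexLe.head_le_of_consStr {c c' : A} {α β : ℕ → A}
    (h : LexLe (consStr c α) (consStr c' β)) : c ≤ c' := by
  rcases h with ⟨_ | i, hpre, hlt⟩ | h
  · exact hlt.le
  · exact (hpre 0 (Nat.succ_pos i)).le
  · exact (congrFun h 0).le

end LexOrder

lemma consStr_head_tail {A : Type*} (α : ℕ → A) : consStr (α 0) (fun n => α (n + 1)) = α := by
  funext n; cases n <;> rfl

section Readable

variable {V A : Type*} {edge : V → V → A → Prop}

lemma ReadableBackward.consStr {u v : V} {c : A} {α : ℕ → A} (he : edge v u c)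
    (hα : ReadableBackward edge v α) : ReadableBackward edge u (consStr c α) := by
  obtain ⟨w, rfl, hw⟩ := hα
  exact ⟨fun n => Nat.casesOn n u w, rfl, fun k => by cases k <;> [exact he; exact hw _]⟩

lemma ReadableBackward.exists_tail {u : V} {α : ℕ → A} (hα : ReadableBackward edge u α) :
    ∃ v, edge v u (α 0) ∧ ReadableBackward edge v (fun n => α (n + 1)) := by
  obtain ⟨w, rfl, hw⟩ := hα
  exact ⟨w 1, hw 0, fun k => w (k + 1), rfl, fun k => hw (k + 1)⟩

lemma IsMinStr.exists_eq_consStr [LinearOrder A] {m : V → ℕ → A}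
    (hm : ∀ u, IsMinStr edge u (m u)) (u : V) :
    ∃ v, edge v u (m u 0) ∧ m u = consStr (m u 0) (m v) := by
  obtain ⟨v, he, htail⟩ := (hm u).1.exists_tail
  have hle_cons : LexLe (consStr (m u 0) (fun n => m u (n + 1))) (consStr (m u 0) (m v)) :=
    (consStr_head_tail (m u)).symm ▸ (hm u).2 _ ((hm v).1.consStr he)
  have htail_eq : (fun n => m u (n + 1)) = m v :=
    LexLe.antisymm hle_cons.of_consStr ((hm v).2 _ htail)
  exact ⟨v, he, htail_eq ▸ (consStr_head_tail (m u)).symm⟩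

end Readable

theorem min_string_recurrence_general {V A : Type*}
    [LinearOrder A] (edge : V → V → A → Prop)
    (m : V → (ℕ → A)) (hm : ∀ u, IsMinStr edge u (m u)) (u : V) :
    ∃ v c, edge v u c ∧ m u = consStr c (m v) ∧
      (∀ v' c', edge v' u c' → LexLe (consStr c (m v)) (consStr c' (m v'))) ∧
      m u 0 = c ∧ (∀ v' c', edge v' u c' → c ≤ c') := by
  obtain ⟨v, he, hmu⟩ := IsMinStr.exists_eq_consStr hm u
  have hle : ∀ v' c', edge v' u c' → LexLe (m u) (consStr c' (m v')) :=
    fun v' c' he' => (hm u).2 _ ((hm v').1.consStr he')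
  refine ⟨v, m u 0, he, hmu, fun v' c' he' => hmu ▸ hle v' c' he', rfl, fun v' c' he' => ?_⟩
  exact (hmu ▸ hle v' c' he').head_le_of_consStr

/-- the minimum strings satisfy the recurrence min_u = c · min_v where
(c, min_v) is lexicographically smallest over incoming edges; in particular min_u(0) is
the smallest incoming label. -/
theorem min_string_recurrence {V A : Type*} [Fintype V] [Fintype A] [Nonempty A]
    [LinearOrder A] (edge : V → V → A → Prop) (hin : ∀ u : V, ∃ v c, edge v u c)
    (m : V → (ℕ → A)) (hm : ∀ u, IsMinStr edge u (m u)) (u : V) :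
    ∃ v c, edge v u c ∧ m u = consStr c (m v) ∧
      (∀ v' c', edge v' u c' → LexLe (consStr c (m v)) (consStr c' (m v'))) ∧
      m u 0 = c ∧ (∀ v' c', edge v' u c' → c ≤ c') :=
  min_string_recurrence_general edge m hm u
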